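/- arXiv:1912.06751 — 6 statements merged into one kernel-verified Lean document; each statement's English description precedes it below -/
import Mathlib

section
/- Let V = (F_2)^n, let ρ be a permutation of V with 0ρ = 0, and let ρ̄ be the Feistel operator on V × V. Suppose 𝒰₁ = {(a, φ₁(a) + d) : a ∈ A₁, d ∈ D₁} and 𝒰₂ = {(a, φ₂(a) + d) : a ∈ A₂, d ∈ D₂} are subgroups of V × V (with Aᵢ ≤ V subgroups, Dᵢ ≤ V subgroups, φᵢ : Aᵢ → V homomorphisms) such that 𝒰₁ρ̄ = 𝒰₂. Then ker φ₁ ≤ D₂. -/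
abbrev Vn (n : ℕ) := Fin n → ZMod 2

/-- The Feistel operator `(x₁, x₂) ↦ (x₂, x₁ + ρ x₂)` on `V × V`. -/
def feistel {n : ℕ} (ρ : Equiv.Perm (Vn n)) : Vn n × Vn n → Vn n × Vn n :=
  fun x => (x.2, x.1 + ρ x.2)

/-- The Goursat-form subset `{(a, φ(a) + d) : a ∈ A, d ∈ D}` of `V × V`. -/
def goursatSet {n : ℕ} (A D : AddSubgroup (Vn n)) (φ : A →+ Vn n) :
    Set (Vn n × Vn n) :=
  {p | ∃ (a : A) (d : D), p = ((a : Vn n), φ a + (d : Vn n))}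

/-- If a Feistel operator maps the Goursat-form subgroup
`𝒰₁ = {(a, φ₁ a + d) : a ∈ A₁, d ∈ D₁}` onto `𝒰₂`, then `ker φ₁ ≤ D₂`. -/
theorem stmt_6 (n : ℕ) (ρ : Equiv.Perm (Vn n)) (hρ : ρ 0 = 0)
    (A₁ D₁ A₂ D₂ : AddSubgroup (Vn n))
    (φ₁ : A₁ →+ Vn n) (φ₂ : A₂ →+ Vn n)
    (h : feistel ρ '' goursatSet A₁ D₁ φ₁ = goursatSet A₂ D₂ φ₂) :
    ∀ a : A₁, φ₁ a = 0 → (a : Vn n) ∈ D₂ := by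
  intro a ha
  have hmem : feistel ρ ((a : Vn n), φ₁ a + ((0 : D₁) : Vn n)) ∈ goursatSet A₂ D₂ φ₂ := by
    rw [← h]
    exact Set.mem_image_of_mem _ ⟨a, 0, rfl⟩
  obtain ⟨a₂, d₂, heq⟩ := hmem
  simp only [feistel, ha, AddSubgroup.coe_zero, add_zero, hρ, Prod.mk.injEq] at heq
  obtain ⟨h1, h2⟩ := heq
  have ha₂ : a₂ = 0 := Subtype.ext h1.symm
  rw [ha₂, map_zero, zero_add] at h2
  rw [h2]; exact d₂.2
end

section
/- Let V = (F_2)^n, ρ a permutation of V with 0ρ = 0, and ρ̄ the Feistel operator on V × V. Suppose 𝒰₁ = {(a, φ₁(a) + d) : a ∈ A₁, d ∈ D₁} and 𝒰₂ = {(a, φ₂(a) + d) : a ∈ A₂, d ∈ D₂} are subgroups of V × V with 𝒰₁ρ̄ = 𝒰₂. Then D₂ ≤ A₁. -/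
/-- If a Feistel operator maps the Goursat-form subgroup `𝒰₁` onto `𝒰₂`,
then `D₂ ≤ A₁`. -/
theorem stmt_7 (n : ℕ) (ρ : Equiv.Perm (Vn n)) (hρ : ρ 0 = 0)
    (A₁ D₁ A₂ D₂ : AddSubgroup (Vn n))
    (φ₁ : A₁ →+ Vn n) (φ₂ : A₂ →+ Vn n)
    (h : feistel ρ '' goursatSet A₁ D₁ φ₁ = goursatSet A₂ D₂ φ₂) :
    D₂ ≤ A₁ := by
  intro d hd
  have hmem : ((0 : Vn n), d) ∈ goursatSet A₂ D₂ φ₂ := by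
    exact ⟨0, ⟨d, hd⟩, by simp⟩
  rw [← h] at hmem
  obtain ⟨⟨x₁, x₂⟩, ⟨a, e, hx⟩, hfx⟩ := hmem
  simp only [feistel, Prod.mk.injEq] at hfx
  obtain ⟨h1, h2⟩ := hfx
  subst h1
  rw [hρ, add_zero] at h2
  subst h2
  have := congrArg Prod.fst hx
  simp at this
  rw [this]
  exact a.2
end

section
/- Let V = (F_2)^n, ρ a permutation of V with 0ρ = 0, and ρ̄ the Feistel operator on V × V. Suppose 𝒰₁ = {(a, φ₁(a) + d) : a ∈ A₁, d ∈ D₁} and 𝒰₂ = {(a, φ₂(a) + d) : a ∈ A₂, d ∈ D₂} are subgroups of V × V with 𝒰₁ρ̄ = 𝒰₂. Then φ₁(D₂) ≤ D₁ (note D₂ ≤ A₁ so φ₁ is defined on D₂). -/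
/-- If a Feistel operator maps the Goursat-form subgroup `𝒰₁` onto `𝒰₂`,
then (given `D₂ ≤ A₁`, so that `φ₁` is defined on `D₂`) `φ₁(D₂) ≤ D₁`. -/
theorem stmt_9 (n : ℕ) (ρ : Equiv.Perm (Vn n)) (hρ : ρ 0 = 0)
    (A₁ D₁ A₂ D₂ : AddSubgroup (Vn n))
    (φ₁ : A₁ →+ Vn n) (φ₂ : A₂ →+ Vn n)
    (h : feistel ρ '' goursatSet A₁ D₁ φ₁ = goursatSet A₂ D₂ φ₂)
    (hD₂A₁ : D₂ ≤ A₁) :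
    ∀ (d : Vn n) (hd : d ∈ D₂), φ₁ ⟨d, hD₂A₁ hd⟩ ∈ D₁ := by
  intro d hd
  have hmem : ((0 : Vn n), d) ∈ goursatSet A₂ D₂ φ₂ := by
    exact ⟨0, ⟨d, hd⟩, by simp⟩
  rw [← h] at hmem
  obtain ⟨⟨x₁, x₂⟩, ⟨a, e, hx⟩, hfe⟩ := hmem
  rw [hx] at hfe
  simp only [feistel, Prod.mk.injEq] at hfe
  obtain ⟨h1, h2⟩ := hfe
  rw [h1, hρ, add_zero] at h2
  have ha : (⟨d, hD₂A₁ hd⟩ : A₁) = a := Subtype.ext h2.symm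
  rw [ha]
  have : φ₁ a = -(e : Vn n) := eq_neg_of_add_eq_zero_left h1
  rw [this]
  exact neg_mem e.2
end

section
/- Let V = (F_2)^n, ρ a permutation of V with 0ρ = 0, and ρ̄ the Feistel operator on V × V. Suppose 𝒰₁ = {(a, φ₁(a)) : a ∈ A₁} and 𝒰₂ = {(a, φ₂(a)) : a ∈ A₂} are subgroups of V × V (Goursat form with D₁ = D₂ = {0}) such that 𝒰₁ρ̄ = 𝒰₂. Then ρ restricted to A₂ is additive: there is a group homomorphism agreeing with ρ on A₂; explicitly, φ₁ is injective with image A₂ and ρ(a) = φ₂(a) + φ₁⁻¹(a) for all a ∈ A₂. -/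
section Graph

variable {G H : Type*} [AddGroup G] {A : AddSubgroup G}

def graphOn (f : A → H) : Set (G × H) := {p | ∃ a : A, p = ((a : G), f a)}

theorem mk_mem_graphOn_iff {f : A → H} {x : G} {y : H} :
    (x, y) ∈ graphOn f ↔ ∃ hx : x ∈ A, f ⟨x, hx⟩ = y := by
  constructor
  · rintro ⟨a, ha⟩
    obtain ⟨rfl, rfl⟩ := Prod.ext_iff.mp ha
    exact ⟨a.2, rfl⟩
  · rintro ⟨hx, rfl⟩
    exact ⟨⟨x, hx⟩, rfl⟩

theorem mk_mem_graphOn (f : A → H) (a : A) : ((a : G), f a) ∈ graphOn f := ⟨a, rfl⟩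

end Graph

theorem Vn.add_self {n : ℕ} (x : Vn n) : x + x = 0 :=
  funext fun i => CharTwo.add_self_eq_zero (x i)

section FeistelGraph

variable {n : ℕ} {ρ : Equiv.Perm (Vn n)} {A₁ A₂ : AddSubgroup (Vn n)}
  {φ₁ : A₁ → Vn n} {φ₂ : A₂ → Vn n}

theorem apply_mem_of_feistel_image_graphOn (h : feistel ρ '' graphOn φ₁ = graphOn φ₂) (b : A₁) :
    φ₁ b ∈ A₂ ∧ ∀ a : A₂, (a : Vn n) = φ₁ b → φ₂ a = b + ρ a := by
  have hb : (φ₁ b, (b : Vn n) + ρ (φ₁ b)) ∈ graphOn φ₂ :=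
    h ▸ Set.mem_image_of_mem (feistel ρ) (mk_mem_graphOn φ₁ b)
  obtain ⟨hmem, hφ₂⟩ := mk_mem_graphOn_iff.mp hb
  refine ⟨hmem, fun a ha => ?_⟩
  obtain rfl : a = ⟨φ₁ b, hmem⟩ := Subtype.ext ha
  exact hφ₂

theorem exists_apply_eq_of_feistel_image_graphOn (h : feistel ρ '' graphOn φ₁ = graphOn φ₂)
    (a : A₂) : ∃ b : A₁, φ₁ b = a := by
  obtain ⟨p, ⟨b, rfl⟩, hp⟩ : ((a : Vn n), φ₂ a) ∈ feistel ρ '' graphOn φ₁ :=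
    h ▸ mk_mem_graphOn φ₂ a
  exact ⟨b, (Prod.ext_iff.mp hp).1⟩

end FeistelGraph

theorem stmt_10_general (n : ℕ) (ρ : Equiv.Perm (Vn n))
    (A₁ A₂ : AddSubgroup (Vn n))
    (φ₁ : A₁ →+ Vn n) (φ₂ : A₂ →+ Vn n)
    (h : feistel ρ '' {p | ∃ a : A₁, p = ((a : Vn n), φ₁ a)} =
      {p | ∃ a : A₂, p = ((a : Vn n), φ₂ a)}) :
    Function.Injective φ₁ ∧
    (Set.range fun a : A₁ => φ₁ a) = (A₂ : Set (Vn n)) ∧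
    (∀ (a : A₂) (b : A₁), φ₁ b = (a : Vn n) → ρ (a : Vn n) = φ₂ a + (b : Vn n)) := by
  change feistel ρ '' graphOn φ₁ = graphOn φ₂ at h
  have hφ₂ := apply_mem_of_feistel_image_graphOn h
  refine ⟨fun b₁ b₂ hb => ?_, ?_, fun a b hab => ?_⟩
  · let a : A₂ := ⟨φ₁ b₁, (hφ₂ b₁).1⟩
    have h₁ := (hφ₂ b₁).2 a rfl
    have h₂ := (hφ₂ b₂).2 a hb
    exact Subtype.ext (add_right_cancel (h₁.symm.trans h₂))
  · ext x
    refine ⟨?_, fun hx => exists_apply_eq_of_feistel_image_graphOn h ⟨x, hx⟩⟩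
    rintro ⟨b, rfl⟩
    exact (hφ₂ b).1
  · rw [(hφ₂ b).2 a hab.symm, add_right_comm, Vn.add_self, zero_add]

/-- If a Feistel operator maps the graph subgroup `𝒰₁ = {(a, φ₁ a) : a ∈ A₁}`
onto `𝒰₂ = {(a, φ₂ a) : a ∈ A₂}` (Goursat form with `D₁ = D₂ = 0`), then `φ₁`
is injective with image `A₂`, and `ρ a = φ₂ a + φ₁⁻¹ a` for all `a ∈ A₂`;
in particular `ρ` is additive on `A₂`. -/
theorem stmt_10 (n : ℕ) (ρ : Equiv.Perm (Vn n)) (hρ : ρ 0 = 0)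
    (A₁ A₂ : AddSubgroup (Vn n))
    (φ₁ : A₁ →+ Vn n) (φ₂ : A₂ →+ Vn n)
    (h : feistel ρ '' {p | ∃ a : A₁, p = ((a : Vn n), φ₁ a)} =
      {p | ∃ a : A₂, p = ((a : Vn n), φ₂ a)}) :
    Function.Injective φ₁ ∧
    (Set.range fun a : A₁ => φ₁ a) = (A₂ : Set (Vn n)) ∧
    (∀ (a : A₂) (b : A₁), φ₁ b = (a : Vn n) → ρ (a : Vn n) = φ₂ a + (b : Vn n)) :=
  stmt_10_general n ρ A₁ A₂ φ₁ φ₂ h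
end

section
/- Let V = (F_2)^n, ρ a permutation of V with 0ρ = 0, and ρ̄ the Feistel operator on V × V. Suppose A₁, D₁, A₂, D₂ are subgroups of V such that (A₁ × D₁)ρ̄ = A₂ × D₂. Then D₁ = A₂ and D₂ = A₁. -/
/-- If a Feistel operator maps the product subgroup `A₁ × D₁` of `V × V` onto
`A₂ × D₂`, then `D₁ = A₂` and `D₂ = A₁`. -/
theorem stmt_11 (n : ℕ) (ρ : Equiv.Perm (Vn n)) (hρ : ρ 0 = 0)
    (A₁ D₁ A₂ D₂ : AddSubgroup (Vn n))
    (h : feistel ρ '' ((A₁ : Set (Vn n)) ×ˢ (D₁ : Set (Vn n))) =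
      (A₂ : Set (Vn n)) ×ˢ (D₂ : Set (Vn n))) :
    D₁ = A₂ ∧ D₂ = A₁ := by
  have h' := Set.ext_iff.mp h
  constructor
  · ext x
    constructor
    · intro hx
      have : feistel ρ (0, x) ∈ (A₂ : Set (Vn n)) ×ˢ (D₂ : Set (Vn n)) := by
        rw [← h]
        exact ⟨(0, x), ⟨A₁.zero_mem, hx⟩, rfl⟩
      exact this.1
    · intro hx
      have : ((x, 0) : Vn n × Vn n) ∈ feistel ρ '' ((A₁ : Set (Vn n)) ×ˢ (D₁ : Set (Vn n))) := by
        rw [h]; exact ⟨hx, D₂.zero_mem⟩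
      obtain ⟨⟨a, d⟩, ⟨ha, hd⟩, heq⟩ := this
      have h1 : d = x := congrArg Prod.fst heq
      exact h1 ▸ hd
  · ext x
    constructor
    · intro hx
      have : ((0, x) : Vn n × Vn n) ∈ feistel ρ '' ((A₁ : Set (Vn n)) ×ˢ (D₁ : Set (Vn n))) := by
        rw [h]; exact ⟨A₂.zero_mem, hx⟩
      obtain ⟨⟨a, d⟩, ⟨ha, hd⟩, heq⟩ := this
      have h1 : d = 0 := congrArg Prod.fst heq
      have h2 : a + ρ d = x := congrArg Prod.snd heq
      rw [h1, hρ, add_zero] at h2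
      exact h2 ▸ ha
    · intro hx
      have : feistel ρ (x, 0) ∈ (A₂ : Set (Vn n)) ×ˢ (D₂ : Set (Vn n)) := by
        rw [← h]
        exact ⟨(x, 0), ⟨hx, D₁.zero_mem⟩, rfl⟩
      have h2 : x + ρ 0 ∈ D₂ := this.2
      rwa [hρ, add_zero] at h2
end

section
/- Let V = (F_2)^n and ρ₁, ρ₂ permutations of V, neither of which is affine, with 0ρ₁ = 0ρ₂ = 0, and let ρ̄₁, ρ̄₂ be their Feistel operators on V × V. Suppose 𝒰₁, 𝒰₂ are non-trivial proper subgroups of V × V such that ρ̄₁ maps the coset partition of 𝒰₁ into the coset partition of 𝒰₂ (for each (v₁,w₁) there is (v₂,w₂) with (𝒰₁ + (v₁,w₁))ρ̄₁ = 𝒰₂ + (v₂,w₂)) and ρ̄₂ maps the coset partition of 𝒰₂ into that of 𝒰₁. Then there exist non-trivial proper subgroups U₁, W₁ of V such that ρ₁ maps the linear partition 𝓛(U₁) into 𝓛(W₁), i.e., for each v ∈ V there exists w ∈ V with (U₁ + v)ρ₁ = W₁ + w. -/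
/-- The coset `S + v` of a subset `S` of an additive group. -/
def coset {α : Type*} [Add α] (S : Set α) (v : α) : Set α :=
  (fun x => x + v) '' S

/-- `ρ` is an affine permutation of `V`: `x ↦ L x + c` with `L` linear. -/
def IsAffinePerm {n : ℕ} (ρ : Equiv.Perm (Vn n)) : Prop :=
  ∃ (L : Vn n →ₗ[ZMod 2] Vn n) (c : Vn n), ∀ x, ρ x = L x + c

/-!
Since `ρ₁ 0 = 0`, the Feistel operator `ρ̄₁` maps `𝒰₁` onto `𝒰₂`, and comparing its values on
a coset of `𝒰₁` shows that `ρ₁` is additive modulo `K = {a | (a, 0) ∈ 𝒰₁}` in every direction of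
the second projection `P₁` of `𝒰₁`. If `P₁ = V`, then `ρ₁` is additive modulo `K` everywhere; `K`
is non-trivial because `ρ₁` is not affine, so `ρ₁` maps the cosets of `ρ₁⁻¹(K)` onto those of `K`.
Otherwise `ρ₁` maps `P₁` into the first projection `P₂` of `𝒰₁` and `ρ₂` maps `P₂` into `P₁`, so
`|P₁| = |P₂|`, and `ρ₁` maps each coset `P₁ + v` injectively, hence onto, `P₂ + ρ₁ v`.
-/

section Coset

variable {α : Type*} [AddGroup α]

theorem mem_coset_iff {S : Set α} {v x : α} : x ∈ coset S v ↔ x - v ∈ S := by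
  rw [coset, Set.image_add_right, Set.mem_preimage, sub_eq_add_neg]

theorem coset_eq_of_zero_mem {H : AddSubgroup α} {v : α} (h : (0 : α) ∈ coset (H : Set α) v) :
    coset (H : Set α) v = H := by
  rw [mem_coset_iff, zero_sub, SetLike.mem_coe, neg_mem_iff] at h
  ext x
  rw [mem_coset_iff, SetLike.mem_coe, SetLike.mem_coe, sub_eq_add_neg,
    add_mem_cancel_right (H.neg_mem h)]

theorem sub_mem_of_mem_coset {H : AddSubgroup α} {v x y : α} (hx : x ∈ coset (H : Set α) v)
    (hy : y ∈ coset (H : Set α) v) : x - y ∈ H := by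
  rw [mem_coset_iff] at hx hy
  simpa using H.sub_mem hx hy

theorem ncard_coset (S : Set α) (v : α) : (coset S v).ncard = S.ncard :=
  Set.ncard_image_of_injective S (add_left_injective v)

end Coset

/-- `f` maps the partition `𝓛(S)` into `𝓛(T)`. -/
def MapsCosets {α β : Type*} [Add α] [Add β] (f : α → β) (S : Set α) (T : Set β) : Prop :=
  ∀ a, ∃ b, f '' coset S a = coset T b

section MapsCosets

variable {α β : Type*} [AddGroup α] [AddGroup β] {f : α → β}

theorem MapsCosets.image_eq {H : AddSubgroup α} {K : AddSubgroup β} (h : MapsCosets f H K)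
    (hf : f 0 = 0) : f '' H = K := by
  obtain ⟨b, hb⟩ := h 0
  have hH : coset (H : Set α) 0 = H := coset_eq_of_zero_mem (by simp [mem_coset_iff])
  rw [hH] at hb
  rw [hb, coset_eq_of_zero_mem (hb ▸ ⟨0, H.zero_mem, hf⟩)]

theorem mapsCosets_of_forall_sub_mem [Finite β] (hf : Function.Injective f)
    {P : AddSubgroup α} {Q : AddSubgroup β} (hcard : Nat.card P = Nat.card Q)
    (h : ∀ u ∈ P, ∀ w, f (u + w) - f w ∈ Q) : MapsCosets f P Q := by
  intro v
  refine ⟨f v, Set.eq_of_subset_of_ncard_le ?_ ?_ (Set.toFinite _)⟩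
  · rintro _ ⟨x, hx, rfl⟩
    rw [mem_coset_iff, SetLike.mem_coe] at hx ⊢
    simpa only [sub_add_cancel] using h _ hx v
  · rw [Set.ncard_image_of_injective _ hf, ncard_coset, ncard_coset, ← Nat.card_coe_set_eq,
      ← Nat.card_coe_set_eq, SetLike.coe_sort_coe, SetLike.coe_sort_coe, hcard]

end MapsCosets

theorem AddSubgroup.ne_bot_and_ne_top_of_card_eq {G : Type*} [AddGroup G] [Finite G]
    {P Q : AddSubgroup G} (hcard : Nat.card P = Nat.card Q) (hQ : Q ≠ ⊥) (hQ' : Q ≠ ⊤) :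
    P ≠ ⊥ ∧ P ≠ ⊤ := by
  rw [Ne, ← AddSubgroup.card_eq_one] at hQ ⊢
  rw [Ne, ← AddSubgroup.card_eq_iff_eq_top] at hQ' ⊢
  rw [hcard]
  exact ⟨hQ, hQ'⟩

theorem exists_mapsCosets_of_card_eq {G : Type*} [AddGroup G] [Finite G] {f : G → G}
    (hf : Function.Injective f) {P Q : AddSubgroup G} (hcard : Nat.card P = Nat.card Q)
    (hQ : Q ≠ ⊥) (hQ' : Q ≠ ⊤) (h : ∀ u ∈ P, ∀ w, f (u + w) - f w ∈ Q) :
    ∃ U W : AddSubgroup G, U ≠ ⊥ ∧ U ≠ ⊤ ∧ W ≠ ⊥ ∧ W ≠ ⊤ ∧ MapsCosets f U W := by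
  obtain ⟨hP, hP'⟩ := AddSubgroup.ne_bot_and_ne_top_of_card_eq hcard hQ hQ'
  exact ⟨P, Q, hP, hP', hQ, hQ', mapsCosets_of_forall_sub_mem hf hcard h⟩

theorem AddSubgroup.eq_top_of_map_snd_eq_top {G H : Type*} [AddGroup G] [AddGroup H]
    {A : AddSubgroup (G × H)} (hsnd : A.map (AddMonoidHom.snd G H) = ⊤)
    (hinl : A.comap (AddMonoidHom.inl G H) = ⊤) : A = ⊤ := by
  refine (AddSubgroup.eq_top_iff' A).2 fun ⟨a, b⟩ => ?_
  obtain ⟨⟨a', b'⟩, hab', rfl⟩ := (AddSubgroup.mem_map).1 (hsnd ▸ AddSubgroup.mem_top b)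
  have hker : a - a' ∈ A.comap (AddMonoidHom.inl G H) := hinl ▸ AddSubgroup.mem_top _
  simpa using A.add_mem hker hab'

/-- `f⁻¹(K)` is the kernel of the homomorphism `x ↦ f x + K`. -/
theorem exists_mapsCosets_of_forall_map_add_sub_mem {G : Type*} [AddCommGroup G] [Finite G]
    (f : Equiv.Perm G) {K : AddSubgroup G} (hK : K ≠ ⊥) (hK' : K ≠ ⊤)
    (h : ∀ x y, f (x + y) - f x - f y ∈ K) :
    ∃ U W : AddSubgroup G, U ≠ ⊥ ∧ U ≠ ⊤ ∧ W ≠ ⊥ ∧ W ≠ ⊤ ∧ MapsCosets f U W := by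
  let φ : G →+ G ⧸ K := AddMonoidHom.mk' (fun x => (f x : G ⧸ K)) fun x y => by
    rw [← QuotientAddGroup.mk_add, QuotientAddGroup.eq_iff_sub_mem, ← sub_sub]
    exact h x y
  have mem_ker : ∀ x, x ∈ φ.ker ↔ f x ∈ K := fun x => QuotientAddGroup.eq_zero_iff (f x)
  refine exists_mapsCosets_of_card_eq f.injective (P := φ.ker)
    (Nat.card_congr (f.subtypeEquiv mem_ker)) hK hK' fun u hu w => ?_
  rw [← QuotientAddGroup.eq_iff_sub_mem]
  change φ (u + w) = φ w
  rw [map_add, hu, zero_add]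

section Feistel

variable {n : ℕ} {ρ : Equiv.Perm (Vn n)} {A B : AddSubgroup (Vn n × Vn n)}

theorem isAffinePerm_of_map_add (h : ∀ x y, ρ (x + y) = ρ x + ρ y) : IsAffinePerm ρ :=
  ⟨AddMonoidHom.toZModLinearMap 2 (AddMonoidHom.mk' ρ h), 0, fun _ => (add_zero _).symm⟩

theorem ne_bot_of_forall_map_add_sub_mem (haff : ¬ IsAffinePerm ρ) {K : AddSubgroup (Vn n)}
    (h : ∀ x y, ρ (x + y) - ρ x - ρ y ∈ K) : K ≠ ⊥ := by
  rintro rfl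
  refine haff (isAffinePerm_of_map_add fun x y => ?_)
  rw [← sub_eq_zero, ← sub_sub]
  exact h x y

theorem feistel_zero (hρ : ρ 0 = 0) : feistel ρ 0 = 0 := by
  simp [feistel, hρ]

theorem map_snd_eq_map_fst_of_feistel_image_eq (h : feistel ρ '' A = B) :
    A.map (AddMonoidHom.snd _ _) = B.map (AddMonoidHom.fst _ _) := by
  ext x
  simp only [AddSubgroup.mem_map]
  constructor
  · rintro ⟨y, hy, rfl⟩
    exact ⟨feistel ρ y, by rw [← SetLike.mem_coe, ← h]; exact Set.mem_image_of_mem _ hy, rfl⟩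
  · rintro ⟨z, hz, rfl⟩
    rw [← SetLike.mem_coe, ← h] at hz
    obtain ⟨y, hy, rfl⟩ := hz
    exact ⟨y, hy, rfl⟩

theorem apply_mem_map_fst_of_feistel_image_eq (h : feistel ρ '' A = B)
    (hBA : B.map (AddMonoidHom.snd _ _) = A.map (AddMonoidHom.fst _ _)) {x : Vn n}
    (hx : x ∈ A.map (AddMonoidHom.snd _ _)) : ρ x ∈ A.map (AddMonoidHom.fst _ _) := by
  obtain ⟨⟨a, x⟩, hax, rfl⟩ := AddSubgroup.mem_map.1 hx
  have hB : feistel ρ (a, x) ∈ (B : Set _) := h ▸ Set.mem_image_of_mem _ hax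
  have hsum : a + ρ x ∈ A.map (AddMonoidHom.fst _ _) := hBA ▸ AddSubgroup.mem_map_of_mem _ hB
  have ha : a ∈ A.map (AddMonoidHom.fst _ _) := AddSubgroup.mem_map_of_mem _ hax
  simpa using AddSubgroup.sub_mem _ hsum ha

theorem card_map_snd_eq_card_map_fst {ρ₁ ρ₂ : Equiv.Perm (Vn n)}
    (h₁ : feistel ρ₁ '' A = B) (h₂ : feistel ρ₂ '' B = A) :
    Nat.card (A.map (AddMonoidHom.snd _ _)) = Nat.card (A.map (AddMonoidHom.fst _ _)) := by
  have hAB := map_snd_eq_map_fst_of_feistel_image_eq h₁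
  have hBA := map_snd_eq_map_fst_of_feistel_image_eq h₂
  refine le_antisymm ?_ ?_
  · exact Nat.card_le_card_of_injective
      (fun x => ⟨ρ₁ x, apply_mem_map_fst_of_feistel_image_eq h₁ hBA x.2⟩)
      fun x y hxy => Subtype.ext (ρ₁.injective (congrArg Subtype.val hxy))
  · have hρ₂ : ∀ x ∈ A.map (AddMonoidHom.fst _ _), ρ₂ x ∈ A.map (AddMonoidHom.snd _ _) := by
      rw [← hBA, hAB]
      exact fun x hx => apply_mem_map_fst_of_feistel_image_eq h₂ hAB hx
    exact Nat.card_le_card_of_injective (fun x => ⟨ρ₂ x, hρ₂ x x.2⟩)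
      fun x y hxy => Subtype.ext (ρ₂.injective (congrArg Subtype.val hxy))

/-- Compare the images of `(0, w)` and `(u₁, u₂ + w)`, which lie in one coset of `A`, with the
image `(u₂, u₁ + ρ u₂)` of `(u₁, u₂)`. -/
theorem sub_mem_comap_inl_of_mapsCosets_feistel (hρ : ρ 0 = 0)
    (h : MapsCosets (feistel ρ) A B) {u : Vn n} (hu : u ∈ A.map (AddMonoidHom.snd _ _))
    (w : Vn n) : ρ (u + w) - ρ u - ρ w ∈ A.comap (AddMonoidHom.inl _ _) := by
  obtain ⟨⟨a, u⟩, hau, rfl⟩ := AddSubgroup.mem_map.1 hu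
  obtain ⟨z, hz⟩ := h (0, w)
  have hmem : ∀ x ∈ coset (A : Set (Vn n × Vn n)) (0, w), feistel ρ x ∈ coset (B : Set _) z :=
    fun x hx => hz ▸ Set.mem_image_of_mem _ hx
  have hdiff := sub_mem_of_mem_coset (hmem (a, u + w) (by simpa [mem_coset_iff] using hau))
    (hmem (0, w) (by simp [mem_coset_iff]))
  rw [← SetLike.mem_coe, ← h.image_eq (feistel_zero hρ)] at hdiff
  obtain ⟨⟨s, t⟩, hst, hfeistel⟩ := hdiff
  obtain ⟨rfl, hs⟩ : t = u ∧ s + ρ t = a + ρ (u + w) - ρ w := by simpa [feistel] using hfeistel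
  change (ρ (t + w) - ρ t - ρ w, (0 : Vn n)) ∈ A
  convert A.sub_mem hst hau using 1
  refine Prod.ext ?_ (sub_self t).symm
  change ρ (t + w) - ρ t - ρ w = s - a
  linear_combination -hs

theorem exists_mapsCosets_of_map_snd_ne_top {ρ₁ ρ₂ : Equiv.Perm (Vn n)}
    (h₁ : feistel ρ₁ '' A = B) (h₂ : feistel ρ₂ '' B = A)
    (hdef : ∀ u ∈ A.map (AddMonoidHom.snd _ _), ∀ w,
      ρ₁ (u + w) - ρ₁ u - ρ₁ w ∈ A.comap (AddMonoidHom.inl _ _))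
    (hA : A ≠ ⊥) (hsnd : A.map (AddMonoidHom.snd _ _) ≠ ⊤) :
    ∃ U W : AddSubgroup (Vn n), U ≠ ⊥ ∧ U ≠ ⊤ ∧ W ≠ ⊥ ∧ W ≠ ⊤ ∧ MapsCosets ρ₁ U W := by
  have hcard := card_map_snd_eq_card_map_fst h₁ h₂
  have hfst_ne_top : A.map (AddMonoidHom.fst _ _) ≠ ⊤ := by
    rwa [Ne, ← AddSubgroup.card_eq_iff_eq_top, ← hcard, AddSubgroup.card_eq_iff_eq_top]
  have hfst_ne_bot : A.map (AddMonoidHom.fst _ _) ≠ ⊥ := by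
    intro hfst
    have hsnd_bot : A.map (AddMonoidHom.snd _ _) = ⊥ := by
      rw [← AddSubgroup.card_eq_one, hcard, hfst, AddSubgroup.card_bot]
    refine hA (eq_bot_iff.2 ?_)
    rw [← AddSubgroup.bot_prod_bot, AddSubgroup.le_prod_iff, hfst, hsnd_bot]
    exact ⟨le_rfl, le_rfl⟩
  refine exists_mapsCosets_of_card_eq ρ₁.injective hcard hfst_ne_bot hfst_ne_top fun u hu w => ?_
  have hρu :=
    apply_mem_map_fst_of_feistel_image_eq h₁ (map_snd_eq_map_fst_of_feistel_image_eq h₂) hu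
  have hdefect : ρ₁ (u + w) - ρ₁ u - ρ₁ w ∈ A.map (AddMonoidHom.fst _ _) :=
    AddSubgroup.mem_map.2 ⟨_, hdef u hu w, rfl⟩
  convert add_mem hdefect hρu using 1
  abel

end Feistel

theorem stmt_14_general (n : ℕ) (ρ₁ ρ₂ : Equiv.Perm (Vn n))
    (hρ₁ : ρ₁ 0 = 0) (hρ₂ : ρ₂ 0 = 0)
    (haff₁ : ¬ IsAffinePerm ρ₁)
    (𝒰₁ 𝒰₂ : AddSubgroup (Vn n × Vn n))
    (h𝒰₁ : 𝒰₁ ≠ ⊥) (h𝒰₁' : 𝒰₁ ≠ ⊤)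
    (h₁ : ∀ z : Vn n × Vn n, ∃ z' : Vn n × Vn n,
      feistel ρ₁ '' coset (𝒰₁ : Set (Vn n × Vn n)) z =
        coset (𝒰₂ : Set (Vn n × Vn n)) z')
    (h₂ : ∀ z : Vn n × Vn n, ∃ z' : Vn n × Vn n,
      feistel ρ₂ '' coset (𝒰₂ : Set (Vn n × Vn n)) z =
        coset (𝒰₁ : Set (Vn n × Vn n)) z') :
    ∃ U₁ W₁ : AddSubgroup (Vn n),
      U₁ ≠ ⊥ ∧ U₁ ≠ ⊤ ∧ W₁ ≠ ⊥ ∧ W₁ ≠ ⊤ ∧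
      ∀ v : Vn n, ∃ w : Vn n,
        (fun x => ρ₁ x) '' coset (U₁ : Set (Vn n)) v = coset (W₁ : Set (Vn n)) w := by
  have h₁ : MapsCosets (feistel ρ₁) 𝒰₁ 𝒰₂ := h₁
  have h₂ : MapsCosets (feistel ρ₂) 𝒰₂ 𝒰₁ := h₂
  have hdef := fun u (hu : u ∈ 𝒰₁.map (AddMonoidHom.snd _ _)) w =>
    sub_mem_comap_inl_of_mapsCosets_feistel hρ₁ h₁ hu w
  by_cases hsnd : 𝒰₁.map (AddMonoidHom.snd _ _) = ⊤
  · have hdef' : ∀ x y, ρ₁ (x + y) - ρ₁ x - ρ₁ y ∈ 𝒰₁.comap (AddMonoidHom.inl _ _) :=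
      fun x y => hdef x (hsnd ▸ AddSubgroup.mem_top x) y
    exact exists_mapsCosets_of_forall_map_add_sub_mem ρ₁
      (ne_bot_of_forall_map_add_sub_mem haff₁ hdef')
      (fun hinl => h𝒰₁' (𝒰₁.eq_top_of_map_snd_eq_top hsnd hinl)) hdef'
  · exact exists_mapsCosets_of_map_snd_ne_top (h₁.image_eq (feistel_zero hρ₁))
      (h₂.image_eq (feistel_zero hρ₂)) hdef h𝒰₁ hsnd

/-- If the Feistel operators of non-affine `ρ₁, ρ₂` map the coset partition of a
non-trivial proper subgroup `𝒰₁ ≤ V × V` into that of `𝒰₂` and back, then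
there are non-trivial proper subgroups `U₁, W₁ ≤ V` such that `ρ₁` maps the
linear partition `𝓛(U₁)` into `𝓛(W₁)`. -/
theorem stmt_14 (n : ℕ) (ρ₁ ρ₂ : Equiv.Perm (Vn n))
    (hρ₁ : ρ₁ 0 = 0) (hρ₂ : ρ₂ 0 = 0)
    (haff₁ : ¬ IsAffinePerm ρ₁) (haff₂ : ¬ IsAffinePerm ρ₂)
    (𝒰₁ 𝒰₂ : AddSubgroup (Vn n × Vn n))
    (h𝒰₁ : 𝒰₁ ≠ ⊥) (h𝒰₁' : 𝒰₁ ≠ ⊤) (h𝒰₂ : 𝒰₂ ≠ ⊥) (h𝒰₂' : 𝒰₂ ≠ ⊤)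
    (h₁ : ∀ z : Vn n × Vn n, ∃ z' : Vn n × Vn n,
      feistel ρ₁ '' coset (𝒰₁ : Set (Vn n × Vn n)) z =
        coset (𝒰₂ : Set (Vn n × Vn n)) z')
    (h₂ : ∀ z : Vn n × Vn n, ∃ z' : Vn n × Vn n,
      feistel ρ₂ '' coset (𝒰₂ : Set (Vn n × Vn n)) z =
        coset (𝒰₁ : Set (Vn n × Vn n)) z') :
    ∃ U₁ W₁ : AddSubgroup (Vn n),
      U₁ ≠ ⊥ ∧ U₁ ≠ ⊤ ∧ W₁ ≠ ⊥ ∧ W₁ ≠ ⊤ ∧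
      ∀ v : Vn n, ∃ w : Vn n,
        (fun x => ρ₁ x) '' coset (U₁ : Set (Vn n)) v = coset (W₁ : Set (Vn n)) w :=
  stmt_14_general n ρ₁ ρ₂ hρ₁ hρ₂ haff₁ 𝒰₁ 𝒰₂ h𝒰₁ h𝒰₁' h₁ h₂
end
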